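/- arXiv:1911.03714 — 3 statements merged into one kernel-verified Lean document; each statement's English description precedes it below -/
import Mathlib

section
/- Suppose the system ẋ = A(t)x is uniformly asymptotically stable and let x be a solution. Then the scalar function t ↦ x(t)ᵀ·H(t)·x(t) is differentiable and satisfies d/dt ( x(t)ᵀ·H(t)·x(t) ) = −‖x(t)‖_I² for all t ≥ t₀, where H(t) = ∫_t^∞ Φ(τ,t)ᵀ·Φ(τ,t) dτ. -/
/-!
Along a solution, `Φ(τ,t) x(t) = x(τ)` for `τ ≥ t` (uniqueness for the linear ODE), so
`x(t)ᵀ H(t) x(t) = ∫_t^∞ ‖x(τ)‖² dτ`; the integral converges because `‖Φ(τ,t)‖` decays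
exponentially. The derivative of this tail integral is `-‖x(t)‖²` by the fundamental theorem
of calculus.
-/

open scoped Matrix
open scoped Matrix.Norms.L2Operator  -- `‖·‖` on matrices is the operator norm induced by the Euclidean norm
open Set MeasureTheory

/-- The Euclidean norm on `ℝⁿ` (denoted `‖·‖_I` in the paper). -/
noncomputable def euclNorm {n : ℕ} (x : Fin n → ℝ) : ℝ :=
  Real.sqrt (x ⬝ᵥ x)

/-- `H(t) = ∫_t^∞ Φ(τ,t)ᵀ Φ(τ,t) dτ`. -/
noncomputable def Hmat {n : ℕ} (Φ : ℝ → ℝ → Matrix (Fin n) (Fin n) ℝ) (t : ℝ) :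
    Matrix (Fin n) (Fin n) ℝ :=
  ∫ τ in Ioi t, (Φ τ t)ᵀ * Φ τ t

open Topology

theorem hasDerivWithinAt_setIntegral_Ioi {E : Type*} [NormedAddCommGroup E] [NormedSpace ℝ E]
    [CompleteSpace E] {g : ℝ → E} {a t : ℝ} (hint : IntegrableOn g (Ioi a))
    (hcont : ContinuousOn g (Ici a)) (ht : t ∈ Ici a) :
    HasDerivWithinAt (fun s => ∫ τ in Ioi s, g τ) (-g t) (Ici a) t := by
  have hsplit : ∀ s ∈ Ici a, ∫ τ in Ioi s, g τ = (∫ τ in Ioi a, g τ) - ∫ τ in a..s, g τ := by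
    intro s hs
    rw [intervalIntegral.integral_of_le hs, eq_sub_iff_add_eq, add_comm,
      ← setIntegral_union (Ioc_disjoint_Ioi le_rfl) measurableSet_Ioi
        (hint.mono_set Ioc_subset_Ioi_self) (hint.mono_set (Ioi_subset_Ioi hs)),
      Ioc_union_Ioi_eq_Ioi hs]
  -- FTC is applied on `Icc a (t + 1)`, for which the `FTCFilter` instance needs this `Fact`
  have htmem : Fact (t ∈ Icc a (t + 1)) := ⟨⟨ht, by linarith⟩⟩
  have hcont' : ContinuousOn g (Icc a (t + 1)) := hcont.mono Icc_subset_Ici_self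
  have hFTC : HasDerivWithinAt (fun s => ∫ τ in a..s, g τ) (g t) (Icc a (t + 1)) t :=
    intervalIntegral.integral_hasDerivWithinAt_right
      ((hcont.mono Icc_subset_Ici_self).intervalIntegrable_of_Icc ht)
      (hcont'.stronglyMeasurableAtFilter_nhdsWithin measurableSet_Icc t) (hcont' t htmem.out)
  have hnhds : Icc a (t + 1) ∈ 𝓝[Ici a] t := by
    rw [← Ici_inter_Iic]
    exact inter_mem_nhdsWithin _ (Iic_mem_nhds (lt_add_one t))
  exact ((hFTC.mono_of_mem_nhdsWithin hnhds).const_sub _).congr_of_mem hsplit ht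

theorem integrableOn_Ioi_of_norm_le_exp {E : Type*} [NormedAddCommGroup E] {f : ℝ → E}
    {a C b : ℝ} (hb : 0 < b) (hf : ContinuousOn f (Ici a))
    (hbound : ∀ τ ∈ Ioi a, ‖f τ‖ ≤ C * Real.exp (-b * (τ - a))) :
    IntegrableOn f (Ioi a) := by
  have hdom : IntegrableOn (fun τ => C * Real.exp (b * a) * Real.exp (-b * τ)) (Ioi a) :=
    (exp_neg_integrableOn_Ioi a hb).const_mul _
  refine hdom.mono' ((hf.mono Ioi_subset_Ici_self).aestronglyMeasurable measurableSet_Ioi) ?_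
  filter_upwards [ae_restrict_mem measurableSet_Ioi] with τ hτ
  calc ‖f τ‖ ≤ C * Real.exp (-b * (τ - a)) := hbound τ hτ
    _ = C * Real.exp (b * a) * Real.exp (-b * τ) := by
      rw [mul_assoc, ← Real.exp_add]; ring_nf

theorem eqOn_Icc_of_hasDerivWithinAt_clm_apply {E : Type*} [NormedAddCommGroup E]
    [NormedSpace ℝ E] {L : ℝ → E →L[ℝ] E} {f g : ℝ → E} {a b : ℝ}
    (hL : ContinuousOn L (Icc a b)) (hf : ContinuousOn f (Icc a b))
    (hf' : ∀ t ∈ Ico a b, HasDerivWithinAt f (L t (f t)) (Ici t) t)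
    (hg : ContinuousOn g (Icc a b))
    (hg' : ∀ t ∈ Ico a b, HasDerivWithinAt g (L t (g t)) (Ici t) t) (ha : f a = g a) :
    EqOn f g (Icc a b) := by
  obtain ⟨C, hC⟩ := isCompact_Icc.exists_bound_of_continuousOn hL
  have hLip : ∀ t ∈ Ico a b, LipschitzOnWith C.toNNReal (L t) univ := fun t ht =>
    ((L t).lipschitz.weaken (by simpa using Real.toNNReal_mono (hC t (Ico_subset_Icc_self ht))))
      |>.lipschitzOnWith
  exact ODE_solution_unique_of_mem_Icc_right hLip hf hf' (fun _ _ => trivial) hg hg'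
    (fun _ _ => trivial) ha

namespace Matrix

variable {ι : Type*} [Fintype ι]

noncomputable def mulVecCLM : Matrix ι ι ℝ →L[ℝ] (ι → ℝ) →L[ℝ] ι → ℝ :=
  LinearMap.toContinuousLinearMap
    ((LinearMap.toContinuousLinearMap : ((ι → ℝ) →ₗ[ℝ] ι → ℝ) ≃ₗ[ℝ] _).toLinearMap ∘ₗ
      mulVecBilin ℝ ℝ)

@[simp]
theorem mulVecCLM_apply (M : Matrix ι ι ℝ) (v : ι → ℝ) : mulVecCLM M v = M *ᵥ v := rfl

noncomputable def quadFormCLM (v : ι → ℝ) : Matrix ι ι ℝ →L[ℝ] ℝ :=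
  LinearMap.toContinuousLinearMap
    { toFun := fun M => v ⬝ᵥ (M *ᵥ v)
      map_add' := fun M N => by rw [add_mulVec, dotProduct_add]
      map_smul' := fun c M => by rw [smul_mulVec, dotProduct_smul]; rfl }

@[simp]
theorem quadFormCLM_apply (v : ι → ℝ) (M : Matrix ι ι ℝ) :
    quadFormCLM v M = v ⬝ᵥ (M *ᵥ v) :=
  rfl

theorem dotProduct_transpose_mul_self_mulVec (M : Matrix ι ι ℝ) (v : ι → ℝ) :
    v ⬝ᵥ ((Mᵀ * M) *ᵥ v) = (M *ᵥ v) ⬝ᵥ (M *ᵥ v) := by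
  rw [← mulVec_mulVec, mulVec_transpose, dotProduct_comm, ← dotProduct_mulVec]

theorem eqOn_Ici_of_hasDerivWithinAt_mulVec {A : ℝ → Matrix ι ι ℝ} {f g : ℝ → ι → ℝ}
    {t₀ s : ℝ} (hA : ContinuousOn A (Ici t₀))
    (hf : ∀ t ∈ Ici t₀, HasDerivWithinAt f (A t *ᵥ f t) (Ici t₀) t)
    (hg : ∀ t ∈ Ici t₀, HasDerivWithinAt g (A t *ᵥ g t) (Ici t₀) t)
    (hs : t₀ ≤ s) (hfg : f s = g s) : EqOn f g (Ici s) := by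
  intro τ hτ
  have hsub : Icc s τ ⊆ Ici t₀ := Icc_subset_Ici_self.trans (Ici_subset_Ici.2 hs)
  have hderiv : ∀ {h : ℝ → ι → ℝ}, (∀ t ∈ Ici t₀, HasDerivWithinAt h (A t *ᵥ h t) (Ici t₀) t) →
      ∀ t ∈ Ico s τ, HasDerivWithinAt h (mulVecCLM (A t) (h t)) (Ici t) t := fun hh t ht =>
    have ht' := hsub (Ico_subset_Icc_self ht)
    (hh t ht').mono (Ici_subset_Ici.2 ht')
  exact eqOn_Icc_of_hasDerivWithinAt_clm_apply
    (mulVecCLM.continuous.comp_continuousOn (hA.mono hsub))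
    (fun t ht => (hf t (hsub ht)).continuousWithinAt.mono hsub) (hderiv hf)
    (fun t ht => (hg t (hsub ht)).continuousWithinAt.mono hsub) (hderiv hg) hfg
    (right_mem_Icc.2 hτ)

theorem transition_mulVec_eq [DecidableEq ι] {A Φ_s : ℝ → Matrix ι ι ℝ} {x : ℝ → ι → ℝ}
    {t₀ s τ : ℝ}
    (hA : ContinuousOn A (Ici t₀)) (hΦ_id : Φ_s s = 1)
    (hΦ_deriv : ∀ t ∈ Ici t₀, HasDerivWithinAt Φ_s (A t * Φ_s t) (Ici t₀) t)
    (hx : ∀ t ∈ Ici t₀, HasDerivWithinAt x (A t *ᵥ x t) (Ici t₀) t) (hs : t₀ ≤ s)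
    (hτ : s ≤ τ) : Φ_s τ *ᵥ x s = x τ := by
  refine eqOn_Ici_of_hasDerivWithinAt_mulVec (f := fun u => Φ_s u *ᵥ x s) hA (fun t ht => ?_)
    hx hs (by rw [hΦ_id, one_mulVec]) hτ
  simpa [Function.comp_def, mulVec_mulVec] using
    (mulVecCLM.flip (x s)).hasFDerivAt.comp_hasDerivWithinAt t (hΦ_deriv t ht)

theorem integrableOn_Ioi_transpose_mul_self [DecidableEq ι] {M : ℝ → Matrix ι ι ℝ}
    {a γ lam : ℝ}
    (hlam : 0 < lam) (hM : ContinuousOn M (Ici a))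
    (hbound : ∀ τ ∈ Ioi a, ‖M τ‖ ≤ γ * Real.exp (-lam * (τ - a))) :
    IntegrableOn (fun τ => (M τ)ᵀ * M τ) (Ioi a) := by
  refine integrableOn_Ioi_of_norm_le_exp (C := γ ^ 2) (by positivity : 0 < 2 * lam)
    ((continuous_id.matrix_transpose.matrix_mul continuous_id).comp_continuousOn hM)
    fun τ hτ => ?_
  calc ‖(M τ)ᵀ * M τ‖ = ‖M τ‖ ^ 2 := by
        rw [← conjTranspose_eq_transpose_of_trivial, l2_opNorm_conjTranspose_mul_self, sq]
    _ ≤ (γ * Real.exp (-lam * (τ - a))) ^ 2 := by gcongr; exact hbound τ hτ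
    _ = γ ^ 2 * Real.exp (-(2 * lam) * (τ - a)) := by
      rw [mul_pow, ← Real.exp_nat_mul]; ring_nf

end Matrix

open Matrix

theorem stmt9_general {n : ℕ} (t₀ : ℝ) (A : ℝ → Matrix (Fin n) (Fin n) ℝ)
    (hA : ContinuousOn A (Ici t₀))
    (Φ : ℝ → ℝ → Matrix (Fin n) (Fin n) ℝ)
    (hΦ_id : ∀ τ ∈ Ici t₀, Φ τ τ = 1)
    (hΦ_deriv : ∀ τ ∈ Ici t₀, ∀ t ∈ Ici t₀,
      HasDerivWithinAt (fun s => Φ s τ) (A t * Φ t τ) (Ici t₀) t)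
    (γ lam : ℝ) (hlam : 0 < lam)
    (hUAS : ∀ τ ∈ Ici t₀, ∀ t ∈ Ici τ, ‖Φ t τ‖ ≤ γ * Real.exp (-lam * (t - τ)))
    (x : ℝ → Fin n → ℝ)
    (hx : ∀ t ∈ Ici t₀, HasDerivWithinAt x (A t *ᵥ x t) (Ici t₀) t) :
    ∀ t ∈ Ici t₀,
      HasDerivWithinAt (fun s => x s ⬝ᵥ (Hmat Φ s *ᵥ x s))
        (-(euclNorm (x t)) ^ 2) (Ici t₀) t := by
  intro t ht
  have hint : ∀ s ∈ Ici t₀, IntegrableOn (fun τ => (Φ τ s)ᵀ * Φ τ s) (Ioi s) := fun s hs =>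
    integrableOn_Ioi_transpose_mul_self hlam
      (fun τ hτ => (hΦ_deriv s hs τ (Ici_subset_Ici.2 hs hτ)).continuousWithinAt.mono
        (Ici_subset_Ici.2 hs))
      (fun τ hτ => hUAS s hs τ (Ioi_subset_Ici_self hτ))
  have hquad : ∀ s ∈ Ici t₀,
      EqOn (fun τ => quadFormCLM (x s) ((Φ τ s)ᵀ * Φ τ s)) (fun τ => x τ ⬝ᵥ x τ) (Ioi s) :=
    fun s hs τ hτ => by
      simp only [quadFormCLM_apply, dotProduct_transpose_mul_self_mulVec,
        transition_mulVec_eq (Φ_s := fun u => Φ u s) hA (hΦ_id s hs) (hΦ_deriv s hs) hx hs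
          (le_of_lt hτ)]
  have hval : ∀ s ∈ Ici t₀, x s ⬝ᵥ (Hmat Φ s *ᵥ x s) = ∫ τ in Ioi s, x τ ⬝ᵥ x τ :=
    fun s hs => by
      rw [← quadFormCLM_apply, Hmat, ← (quadFormCLM _).integral_comp_comm (hint s hs)]
      exact setIntegral_congr_fun measurableSet_Ioi (hquad s hs)
  have hgint : IntegrableOn (fun τ => x τ ⬝ᵥ x τ) (Ioi t₀) :=
    IntegrableOn.congr_fun ((quadFormCLM _).integrable_comp (hint t₀ self_mem_Ici))
      (hquad t₀ self_mem_Ici) measurableSet_Ioi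
  have hgcont : ContinuousOn (fun τ => x τ ⬝ᵥ x τ) (Ici t₀) :=
    (continuous_id.dotProduct continuous_id).comp_continuousOn fun τ hτ =>
      (hx τ hτ).continuousWithinAt
  rw [euclNorm, Real.sq_sqrt (show 0 ≤ x t ⬝ᵥ x t from
    Fintype.sum_nonneg fun _ => mul_self_nonneg _)]
  exact (hasDerivWithinAt_setIntegral_Ioi hgint hgcont ht).congr hval (hval t ht)

/-- for a uniformly asymptotically stable system and a solution `x`,
`d/dt (x(t)ᵀ H(t) x(t)) = −‖x(t)‖²` for all `t ≥ t₀`. -/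
theorem stmt9 {n : ℕ} (t₀ : ℝ) (A : ℝ → Matrix (Fin n) (Fin n) ℝ)
    (hA : ContinuousOn A (Ici t₀))
    (Φ : ℝ → ℝ → Matrix (Fin n) (Fin n) ℝ)
    (hΦ_id : ∀ τ ∈ Ici t₀, Φ τ τ = 1)
    (hΦ_deriv : ∀ τ ∈ Ici t₀, ∀ t ∈ Ici t₀,
      HasDerivWithinAt (fun s => Φ s τ) (A t * Φ t τ) (Ici t₀) t)
    (γ lam : ℝ) (hγ : 0 < γ) (hlam : 0 < lam)
    (hUAS : ∀ τ ∈ Ici t₀, ∀ t ∈ Ici τ, ‖Φ t τ‖ ≤ γ * Real.exp (-lam * (t - τ)))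
    (x : ℝ → Fin n → ℝ)
    (hx : ∀ t ∈ Ici t₀, HasDerivWithinAt x (A t *ᵥ x t) (Ici t₀) t) :
    ∀ t ∈ Ici t₀,
      HasDerivWithinAt (fun s => x s ⬝ᵥ (Hmat Φ s *ᵥ x s))
        (-(euclNorm (x t)) ^ 2) (Ici t₀) t :=
  stmt9_general t₀ A hA Φ hΦ_id hΦ_deriv γ lam hlam hUAS x hx
end

section
/- Suppose the system ẋ = A(t)x is uniformly asymptotically stable and let x be any solution. Then for all t ≥ t₀: ‖x(t₀)‖_{H(t₀)} · exp(−(1/2)·∫_{t₀}^t dτ/λ_min[H(τ)]) ≤ ‖x(t)‖_{H(t)} ≤ ‖x(t₀)‖_{H(t₀)} · exp(−(1/2)·∫_{t₀}^t dτ/λ_max[H(τ)]), where H(t) = ∫_t^∞ Φ(τ,t)ᵀ·Φ(τ,t) dτ. -/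
open scoped Matrix
open scoped Matrix.Norms.L2Operator  -- `‖·‖` on matrices is the operator norm induced by the Euclidean norm
open Set MeasureTheory

/-- The weighted vector norm `‖x‖_H = (xᵀ H x)^{1/2}` for a weight matrix `H`. -/
noncomputable def wNorm {n : ℕ} (H : Matrix (Fin n) (Fin n) ℝ) (x : Fin n → ℝ) : ℝ :=
  Real.sqrt (x ⬝ᵥ (H *ᵥ x))

/-- The largest (real) eigenvalue of a matrix, as the supremum of its real spectrum.
For a real symmetric matrix this is `λ_max`. -/
noncomputable def lambdaMax {n : ℕ} (M : Matrix (Fin n) (Fin n) ℝ) : ℝ :=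
  sSup (spectrum ℝ M)

/-- The smallest (real) eigenvalue of a matrix, as the infimum of its real spectrum.
For a real symmetric matrix this is `λ_min`. -/
noncomputable def lambdaMin {n : ℕ} (M : Matrix (Fin n) (Fin n) ℝ) : ℝ :=
  sInf (spectrum ℝ M)

/-!
Put `V(t) = ‖x(t)‖²_{H(t)}`. Since `Φ(s,t) x(t) = x(s)`, the weighted norm unwinds to the
tail integral `V(t) = ∫_t^∞ |x(s)|² ds`, so `V' = -|x|²`. The Rayleigh bounds
`λ_min |x|² ≤ V ≤ λ_max |x|²` turn this into `-V/λ_min ≤ V' ≤ -V/λ_max`, and the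
integrating factor `exp ∫ 1/λ` makes `V · exp ∫ 1/λ` monotone; square roots give both bounds.
The fundamental theorem of calculus needs `τ ↦ λ(H(τ))` continuous: the extreme eigenvalues
are `1`-Lipschitz for the operator norm (Weyl), and
`H(τ) = Φ(t₀,τ)ᵀ (∫_τ^∞ Φ(s,t₀)ᵀ Φ(s,t₀) ds) Φ(t₀,τ)` is continuous since
`Φ(t₀,τ) = Φ(τ,t₀)⁻¹`.
-/

section LinearODE

variable {E : Type*} [NormedAddCommGroup E] [NormedSpace ℝ E]

theorem linear_ODE_solution_unique_Ici {A : ℝ → E →L[ℝ] E} {t₀ c : ℝ}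
    (hA : ContinuousOn A (Ici t₀)) (hc : t₀ ≤ c) {y z : ℝ → E}
    (hy : ∀ t ∈ Ici t₀, HasDerivWithinAt y (A t (y t)) (Ici t₀) t)
    (hz : ∀ t ∈ Ici t₀, HasDerivWithinAt z (A t (z t)) (Ici t₀) t)
    (hyz : y c = z c) : EqOn y z (Ici t₀) := by
  intro t (ht : t₀ ≤ t)
  set T := max c t
  obtain ⟨C, hC⟩ := isCompact_Icc.exists_bound_of_continuousOn
    (hA.mono (Icc_subset_Ici_self : Icc t₀ T ⊆ Ici t₀))
  have hlip : ∀ s ∈ Icc t₀ T, LipschitzOnWith (Real.toNNReal C) (A s) univ := fun s hs =>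
    ((A s).lipschitz.weaken <| by
      rw [← NNReal.coe_le_coe, coe_nnnorm]
      exact (hC s hs).trans (Real.le_coe_toNNReal C)).lipschitzOnWith
  have hcont : ∀ {w : ℝ → E},
      (∀ t ∈ Ici t₀, HasDerivWithinAt w (A t (w t)) (Ici t₀) t) →
      ContinuousOn w (Icc t₀ T) := fun hw s hs =>
    (hw s hs.1).continuousWithinAt.mono Icc_subset_Ici_self
  rcases le_total c t with hct | htc
  · have hsub : Icc c T ⊆ Icc t₀ T := Icc_subset_Icc_left hc
    have hforward : ∀ {w : ℝ → E},
        (∀ t ∈ Ici t₀, HasDerivWithinAt w (A t (w t)) (Ici t₀) t) →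
        ∀ s ∈ Ico c T, HasDerivWithinAt w (A s (w s)) (Ici s) s := fun hw s hs =>
      (hw s (hc.trans hs.1)).mono (Ici_subset_Ici.2 (hc.trans hs.1))
    exact ODE_solution_unique_of_mem_Icc_right (s := fun _ => univ)
      (fun s hs => hlip s (hsub (Ico_subset_Icc_self hs))) ((hcont hy).mono hsub) (hforward hy)
      (fun _ _ => mem_univ _) ((hcont hz).mono hsub) (hforward hz) (fun _ _ => mem_univ _) hyz
      ⟨hct, le_max_right c t⟩
  · have hsub : Icc t₀ c ⊆ Icc t₀ T := Icc_subset_Icc_right (le_max_left c t)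
    have hbackward : ∀ {w : ℝ → E},
        (∀ t ∈ Ici t₀, HasDerivWithinAt w (A t (w t)) (Ici t₀) t) →
        ∀ s ∈ Ioc t₀ c, HasDerivWithinAt w (A s (w s)) (Iic s) s := fun hw s hs =>
      ((hw s hs.1.le).hasDerivAt (Ici_mem_nhds hs.1)).hasDerivWithinAt
    exact ODE_solution_unique_of_mem_Icc_left (s := fun _ => univ)
      (fun s hs => hlip s (hsub (Ioc_subset_Icc_self hs))) ((hcont hy).mono hsub) (hbackward hy)
      (fun _ _ => mem_univ _) ((hcont hz).mono hsub) (hbackward hz) (fun _ _ => mem_univ _) hyz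
      ⟨ht, htc⟩

end LinearODE

section MatrixMaps

variable {n : ℕ}

noncomputable def mulVecCLM (n : ℕ) :
    Matrix (Fin n) (Fin n) ℝ →L[ℝ] (Fin n → ℝ) →L[ℝ] (Fin n → ℝ) :=
  (Matrix.toLin'.trans LinearMap.toContinuousLinearMap).toContinuousLinearEquiv
    |>.toContinuousLinearMap

@[simp]
theorem mulVecCLM_apply (M : Matrix (Fin n) (Fin n) ℝ) (v : Fin n → ℝ) :
    mulVecCLM n M v = M *ᵥ v := rfl

noncomputable def quadFormCLM (v : Fin n → ℝ) : Matrix (Fin n) (Fin n) ℝ →L[ℝ] ℝ :=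
  LinearMap.toContinuousLinearMap
    { toFun := fun M => v ⬝ᵥ (M *ᵥ v)
      map_add' := fun M N => by simp only [Matrix.add_mulVec, dotProduct_add]
      map_smul' := fun c M => by simp [Matrix.smul_mulVec] }

@[simp]
theorem quadFormCLM_apply (v : Fin n → ℝ) (M : Matrix (Fin n) (Fin n) ℝ) :
    quadFormCLM v M = v ⬝ᵥ (M *ᵥ v) := rfl

theorem quadForm_transpose_mul_self (M : Matrix (Fin n) (Fin n) ℝ) (v : Fin n → ℝ) :
    v ⬝ᵥ ((Mᵀ * M) *ᵥ v) = (M *ᵥ v) ⬝ᵥ (M *ᵥ v) := by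
  rw [← Matrix.mulVec_mulVec, Matrix.dotProduct_mulVec, Matrix.vecMul_transpose]

end MatrixMaps

structure IsTransitionMatrix {n : ℕ} (t₀ : ℝ) (A : ℝ → Matrix (Fin n) (Fin n) ℝ)
    (Φ : ℝ → ℝ → Matrix (Fin n) (Fin n) ℝ) : Prop where
  continuousOn_coeff : ContinuousOn A (Ici t₀)
  apply_self : ∀ τ ∈ Ici t₀, Φ τ τ = 1
  hasDerivWithinAt : ∀ τ ∈ Ici t₀, ∀ t ∈ Ici t₀,
    HasDerivWithinAt (fun s => Φ s τ) (A t * Φ t τ) (Ici t₀) t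

structure IsUniformlyExpStable {n : ℕ} (t₀ γ lam : ℝ)
    (Φ : ℝ → ℝ → Matrix (Fin n) (Fin n) ℝ) : Prop where
  rate_pos : 0 < lam
  norm_le : ∀ τ ∈ Ici t₀, ∀ t ∈ Ici τ, ‖Φ t τ‖ ≤ γ * Real.exp (-lam * (t - τ))

namespace IsTransitionMatrix

variable {n : ℕ} {t₀ : ℝ} {A : ℝ → Matrix (Fin n) (Fin n) ℝ}
  {Φ : ℝ → ℝ → Matrix (Fin n) (Fin n) ℝ}

theorem continuousOn_fst (hΦ : IsTransitionMatrix t₀ A Φ) {τ : ℝ} (hτ : τ ∈ Ici t₀) :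
    ContinuousOn (fun s => Φ s τ) (Ici t₀) :=
  fun t ht => (hΦ.hasDerivWithinAt τ hτ t ht).continuousWithinAt

theorem mul_eq (hΦ : IsTransitionMatrix t₀ A Φ) {s τ σ : ℝ} (hs : s ∈ Ici t₀)
    (hτ : τ ∈ Ici t₀) (hσ : σ ∈ Ici t₀) : Φ s τ * Φ τ σ = Φ s σ := by
  refine linear_ODE_solution_unique_Ici (A := fun t => ContinuousLinearMap.mul ℝ _ (A t))
    (y := fun s => Φ s τ * Φ τ σ)
    ((ContinuousLinearMap.mul ℝ _).continuous.comp_continuousOn hΦ.continuousOn_coeff) hτ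
    (fun t ht => ?_) (hΦ.hasDerivWithinAt σ hσ) (by rw [hΦ.apply_self τ hτ, one_mul]) hs
  simpa only [ContinuousLinearMap.mul_apply', mul_assoc] using
    (hΦ.hasDerivWithinAt τ hτ t ht).mul_const (Φ τ σ)

theorem inv_eq (hΦ : IsTransitionMatrix t₀ A Φ) {τ σ : ℝ}
    (hτ : τ ∈ Ici t₀) (hσ : σ ∈ Ici t₀) : (Φ τ σ)⁻¹ = Φ σ τ :=
  Matrix.inv_eq_left_inv (by rw [hΦ.mul_eq hσ hτ hσ, hΦ.apply_self σ hσ])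

theorem eq_mulVec (hΦ : IsTransitionMatrix t₀ A Φ)
    {x : ℝ → Fin n → ℝ}
    (hx : ∀ t ∈ Ici t₀, HasDerivWithinAt x (A t *ᵥ x t) (Ici t₀) t)
    {s τ : ℝ} (hs : s ∈ Ici t₀) (hτ : τ ∈ Ici t₀) : x s = Φ s τ *ᵥ x τ := by
  refine linear_ODE_solution_unique_Ici (A := fun t => mulVecCLM n (A t))
    (z := fun s => Φ s τ *ᵥ x τ)
    ((mulVecCLM n).continuous.comp_continuousOn hΦ.continuousOn_coeff) hτ hx
    (fun t ht => ?_) (by rw [hΦ.apply_self τ hτ, Matrix.one_mulVec]) hs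
  have := ((mulVecCLM n).flip (x τ)).hasFDerivAt.comp_hasDerivWithinAt t
    (hΦ.hasDerivWithinAt τ hτ t ht)
  simpa [Function.comp_def, Matrix.mulVec_mulVec] using this

theorem continuousOn_snd (hΦ : IsTransitionMatrix t₀ A Φ) :
    ContinuousOn (fun τ => Φ t₀ τ) (Ici t₀) := by
  intro τ hτ
  have hdet : (Φ τ t₀).det ≠ 0 := Matrix.det_ne_zero_of_left_inverse
    (by rw [hΦ.mul_eq self_mem_Ici hτ self_mem_Ici, hΦ.apply_self t₀ self_mem_Ici])
  have hinv : ContinuousAt Inv.inv (Φ τ t₀) := continuousAt_matrix_inv _ <| by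
    simpa only [Ring.inverse_eq_inv'] using continuousAt_inv₀ hdet
  exact (hinv.comp_continuousWithinAt (f := fun s => Φ s t₀)
    (hΦ.continuousOn_fst self_mem_Ici τ hτ)).congr
    (fun σ hσ => (hΦ.inv_eq hσ self_mem_Ici).symm) (hΦ.inv_eq hτ self_mem_Ici).symm

end IsTransitionMatrix

theorem setIntegral_Ioi_pos_of_continuousWithinAt {f : ℝ → ℝ} {a : ℝ}
    (hf : IntegrableOn f (Ioi a)) (hnonneg : ∀ s ∈ Ioi a, 0 ≤ f s)
    (hcont : ContinuousWithinAt f (Ici a) a) (hpos : 0 < f a) : 0 < ∫ s in Ioi a, f s := by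
  rw [setIntegral_pos_iff_support_of_nonneg_ae
    ((ae_restrict_iff' measurableSet_Ioi).2 (ae_of_all _ hnonneg)) hf]
  obtain ⟨u, hau, hu⟩ := mem_nhdsGE_iff_exists_Ico_subset.1
    (continuousWithinAt_const.eventually_lt hcont hpos)
  calc (0 : ENNReal) < volume (Ioo a u) := by simpa using hau
    _ ≤ volume (Function.support f ∩ Ioi a) :=
      measure_mono fun s hs => ⟨(hu (Ioo_subset_Ico_self hs)).ne', hs.1⟩

section Gramian

variable {n : ℕ} {X : Type*} [MeasurableSpace X] {μ : Measure X}

theorem integral_matrix_transpose (F : X → Matrix (Fin n) (Fin n) ℝ) :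
    ∫ x, (F x)ᵀ ∂μ = (∫ x, F x ∂μ)ᵀ :=
  (Matrix.transposeLinearEquiv (Fin n) (Fin n) ℝ ℝ).toContinuousLinearEquiv.integral_comp_comm F

theorem isHermitian_integral_transpose_mul_self (F : X → Matrix (Fin n) (Fin n) ℝ) :
    (∫ x, (F x)ᵀ * F x ∂μ).IsHermitian := by
  rw [Matrix.IsHermitian, Matrix.conjTranspose_eq_transpose_of_trivial,
    ← integral_matrix_transpose]
  simp only [Matrix.transpose_mul, Matrix.transpose_transpose]

theorem integrable_dotProduct_mulVec_mulVec {F : X → Matrix (Fin n) (Fin n) ℝ}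
    (hF : Integrable (fun x => (F x)ᵀ * F x) μ) (v : Fin n → ℝ) :
    Integrable (fun x => (F x *ᵥ v) ⬝ᵥ (F x *ᵥ v)) μ := by
  simpa only [quadFormCLM_apply, quadForm_transpose_mul_self] using
    (quadFormCLM v).integrable_comp hF

theorem dotProduct_integral_transpose_mul_self_mulVec {F : X → Matrix (Fin n) (Fin n) ℝ}
    (hF : Integrable (fun x => (F x)ᵀ * F x) μ) (v : Fin n → ℝ) :
    v ⬝ᵥ ((∫ x, (F x)ᵀ * F x ∂μ) *ᵥ v) =
      ∫ x, (F x *ᵥ v) ⬝ᵥ (F x *ᵥ v) ∂μ := by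
  simpa only [quadFormCLM_apply, quadForm_transpose_mul_self] using
    ((quadFormCLM v).integral_comp_comm hF).symm

theorem integral_transpose_mul_self_mul {F : X → Matrix (Fin n) (Fin n) ℝ}
    (hF : Integrable (fun x => (F x)ᵀ * F x) μ) (Q : Matrix (Fin n) (Fin n) ℝ) :
    ∫ x, (F x * Q)ᵀ * (F x * Q) ∂μ = Qᵀ * (∫ x, (F x)ᵀ * F x ∂μ) * Q := by
  have h := ((ContinuousLinearMap.mul ℝ _ Qᵀ).comp
    ((ContinuousLinearMap.mul ℝ _).flip Q)).integral_comp_comm hF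
  simpa [Matrix.transpose_mul, mul_assoc] using h

theorem integrableOn_transpose_mul_self_of_norm_le_exp {F : ℝ → Matrix (Fin n) (Fin n) ℝ}
    {a γ lam : ℝ} (hlam : 0 < lam) (hF : ContinuousOn F (Ioi a))
    (hbound : ∀ s ∈ Ioi a, ‖F s‖ ≤ γ * Real.exp (-lam * (s - a))) :
    IntegrableOn (fun s => (F s)ᵀ * F s) (Ioi a) := by
  have hexp : IntegrableOn
      (fun s => γ ^ 2 * Real.exp (2 * lam * a) * Real.exp (-(2 * lam) * s)) (Ioi a) :=
    (exp_neg_integrableOn_Ioi a (by positivity)).const_mul _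
  refine hexp.mono' ((continuous_id.matrix_transpose.comp_continuousOn hF).mul hF
    |>.aestronglyMeasurable measurableSet_Ioi)
    ((ae_restrict_iff' measurableSet_Ioi).2 (ae_of_all _ fun s hs => ?_))
  rw [← Matrix.conjTranspose_eq_transpose_of_trivial, Matrix.l2_opNorm_conjTranspose_mul_self,
    mul_assoc, ← Real.exp_add, ← sq]
  calc ‖F s‖ ^ 2 ≤ (γ * Real.exp (-lam * (s - a))) ^ 2 :=
        pow_le_pow_left₀ (norm_nonneg _) (hbound s hs) 2
    _ = _ := by rw [mul_pow, ← Real.exp_nat_mul]; ring_nf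

theorem posDef_integral_Ioi_transpose_mul_self {F : ℝ → Matrix (Fin n) (Fin n) ℝ} {a : ℝ}
    (hF : IntegrableOn (fun s => (F s)ᵀ * F s) (Ioi a)) (hcont : ContinuousWithinAt F (Ici a) a)
    (hFa : F a = 1) : (∫ s in Ioi a, (F s)ᵀ * F s).PosDef := by
  refine .of_dotProduct_mulVec_pos (isHermitian_integral_transpose_mul_self F) fun v hv => ?_
  rw [star_trivial, dotProduct_integral_transpose_mul_self_mulVec hF]
  have hcont' : ContinuousWithinAt (fun s => (F s *ᵥ v) ⬝ᵥ (F s *ᵥ v)) (Ici a) a :=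
    ((continuous_id.dotProduct continuous_id).comp ((mulVecCLM n).flip v).continuous).continuousAt
      |>.comp_continuousWithinAt hcont
  refine setIntegral_Ioi_pos_of_continuousWithinAt (integrable_dotProduct_mulVec_mulVec hF v)
    (fun s _ => dotProduct_self_star_nonneg _) hcont' ?_
  simpa [hFa] using Matrix.dotProduct_self_star_pos_iff.2 hv

end Gramian

section Eigenvalues

variable {n : ℕ} {H K : Matrix (Fin n) (Fin n) ℝ}

theorem posSemidef_smul_one_sub_iff (hH : H.IsHermitian) (c : ℝ) :
    (c • 1 - H).PosSemidef ↔ ∀ k ∈ spectrum ℝ H, k ≤ c := by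
  rw [Matrix.posSemidef_iff_isHermitian_and_spectrum_nonneg,
    and_iff_right ((Matrix.isHermitian_one.smul (IsSelfAdjoint.all c)).sub hH),
    ← Algebra.algebraMap_eq_smul_one, ← spectrum.singleton_sub_eq]
  simp [Set.subset_def]

theorem posSemidef_sub_smul_one_iff (hH : H.IsHermitian) (c : ℝ) :
    (H - c • 1).PosSemidef ↔ ∀ k ∈ spectrum ℝ H, c ≤ k := by
  rw [Matrix.posSemidef_iff_isHermitian_and_spectrum_nonneg,
    and_iff_right (hH.sub (Matrix.isHermitian_one.smul (IsSelfAdjoint.all c))),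
    ← Algebra.algebraMap_eq_smul_one, ← spectrum.sub_singleton_eq]
  simp [Set.subset_def]

theorem posSemidef_lambdaMax_smul_one_sub (hH : H.IsHermitian) :
    (lambdaMax H • 1 - H).PosSemidef :=
  (posSemidef_smul_one_sub_iff hH _).2 fun _ hk => le_csSup Matrix.finite_real_spectrum.bddAbove hk

theorem posSemidef_sub_lambdaMin_smul_one (hH : H.IsHermitian) :
    (H - lambdaMin H • 1).PosSemidef :=
  (posSemidef_sub_smul_one_iff hH _).2 fun _ hk => csInf_le Matrix.finite_real_spectrum.bddBelow hk

theorem dotProduct_mulVec_le_lambdaMax (hH : H.IsHermitian) (v : Fin n → ℝ) :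
    v ⬝ᵥ (H *ᵥ v) ≤ lambdaMax H * (v ⬝ᵥ v) := by
  have := (posSemidef_lambdaMax_smul_one_sub hH).dotProduct_mulVec_nonneg v
  simp only [star_trivial, Matrix.sub_mulVec, Matrix.smul_mulVec, Matrix.one_mulVec,
    dotProduct_sub, dotProduct_smul, smul_eq_mul] at this
  linarith

theorem lambdaMin_mul_le_dotProduct_mulVec (hH : H.IsHermitian) (v : Fin n → ℝ) :
    lambdaMin H * (v ⬝ᵥ v) ≤ v ⬝ᵥ (H *ᵥ v) := by
  have := (posSemidef_sub_lambdaMin_smul_one hH).dotProduct_mulVec_nonneg v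
  simp only [star_trivial, Matrix.sub_mulVec, Matrix.smul_mulVec, Matrix.one_mulVec,
    dotProduct_sub, dotProduct_smul, smul_eq_mul] at this
  linarith

theorem abs_le_norm_of_mem_spectrum {k : ℝ} (hk : k ∈ spectrum ℝ H) : |k| ≤ ‖H‖ := by
  have hone : ‖(1 : Matrix (Fin n) (Fin n) ℝ)‖ ≤ 1 := by
    rw [← Matrix.diagonal_one, Matrix.l2_opNorm_diagonal]
    exact (pi_norm_le_iff_of_nonneg zero_le_one).2 fun _ => by simp
  simpa using (spectrum.norm_le_norm_mul_of_mem hk).trans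
    (mul_le_of_le_one_right (norm_nonneg _) hone)

variable [Nonempty (Fin n)]

theorem nonempty_spectrum_of_isHermitian (hH : H.IsHermitian) : (spectrum ℝ H).Nonempty :=
  hH.spectrum_real_eq_range_eigenvalues ▸ Set.range_nonempty _

theorem lambdaMax_le_of_posSemidef (hH : H.IsHermitian) {c : ℝ}
    (h : (c • 1 - H).PosSemidef) : lambdaMax H ≤ c :=
  csSup_le (nonempty_spectrum_of_isHermitian hH) ((posSemidef_smul_one_sub_iff hH c).1 h)

theorem le_lambdaMin_of_posSemidef (hH : H.IsHermitian) {c : ℝ}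
    (h : (H - c • 1).PosSemidef) : c ≤ lambdaMin H :=
  le_csInf (nonempty_spectrum_of_isHermitian hH) ((posSemidef_sub_smul_one_iff hH c).1 h)

theorem lambdaMax_le_lambdaMax_add_norm_sub (hH : H.IsHermitian) (hK : K.IsHermitian) :
    lambdaMax H ≤ lambdaMax K + ‖H - K‖ := by
  refine lambdaMax_le_of_posSemidef hH ?_
  have hHK := (posSemidef_smul_one_sub_iff (hH.sub hK) ‖H - K‖).2 fun k hk =>
    (le_abs_self k).trans (abs_le_norm_of_mem_spectrum hk)
  convert (posSemidef_lambdaMax_smul_one_sub hK).add hHK using 1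
  rw [add_smul]; abel

theorem lambdaMin_sub_norm_sub_le_lambdaMin (hH : H.IsHermitian) (hK : K.IsHermitian) :
    lambdaMin K - ‖H - K‖ ≤ lambdaMin H := by
  refine le_lambdaMin_of_posSemidef hH ?_
  have hHK := (posSemidef_sub_smul_one_iff (hH.sub hK) (-‖H - K‖)).2 fun k hk =>
    neg_le_of_abs_le (abs_le_norm_of_mem_spectrum hk)
  convert (posSemidef_sub_lambdaMin_smul_one hK).add hHK using 1
  rw [sub_smul, neg_smul]; abel

theorem lipschitzOnWith_lambdaMax :
    LipschitzOnWith 1 (lambdaMax (n := n)) {H | H.IsHermitian} :=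
  LipschitzOnWith.of_dist_le_mul fun H hH K hK => by
    rw [NNReal.coe_one, one_mul, Real.dist_eq, dist_eq_norm, abs_sub_le_iff]
    constructor
    · linarith [lambdaMax_le_lambdaMax_add_norm_sub hH hK]
    · linarith [norm_sub_rev H K ▸ lambdaMax_le_lambdaMax_add_norm_sub hK hH]

theorem lipschitzOnWith_lambdaMin :
    LipschitzOnWith 1 (lambdaMin (n := n)) {H | H.IsHermitian} :=
  LipschitzOnWith.of_dist_le_mul fun H hH K hK => by
    rw [NNReal.coe_one, one_mul, Real.dist_eq, dist_eq_norm, abs_sub_le_iff]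
    constructor
    · linarith [norm_sub_rev H K ▸ lambdaMin_sub_norm_sub_le_lambdaMin hK hH]
    · linarith [lambdaMin_sub_norm_sub_le_lambdaMin hH hK]

theorem lambdaMin_pos (hH : H.PosDef) : 0 < lambdaMin H := by
  obtain ⟨i, hi⟩ : lambdaMin H ∈ Set.range hH.isHermitian.eigenvalues :=
    hH.isHermitian.spectrum_real_eq_range_eigenvalues ▸
      (nonempty_spectrum_of_isHermitian hH.isHermitian).csInf_mem Matrix.finite_real_spectrum
  exact hi ▸ hH.eigenvalues_pos i

theorem lambdaMax_pos (hH : H.PosDef) : 0 < lambdaMax H :=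
  (lambdaMin_pos hH).trans_le <| csInf_le_csSup (nonempty_spectrum_of_isHermitian hH.isHermitian)
    Matrix.finite_real_spectrum.bddBelow Matrix.finite_real_spectrum.bddAbove

end Eigenvalues

section Comparison

variable {V V' r : ℝ → ℝ} {a b : ℝ}

theorem hasDerivAt_mul_exp_integral (hr : ContinuousOn r (Icc a b)) {u : ℝ} (hu : u ∈ Ioo a b)
    (hV : HasDerivAt V (V' u) u) :
    HasDerivAt (fun s => V s * Real.exp (∫ x in a..s, r x))
      ((V' u + r u * V u) * Real.exp (∫ x in a..u, r x)) u := by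
  have hI : HasDerivAt (fun s => ∫ x in a..s, r x) (r u) u :=
    intervalIntegral.integral_hasDerivAt_right
      ((hr.mono (Icc_subset_Icc_right hu.2.le)).intervalIntegrable_of_Icc hu.1.le)
      ((hr.mono Ioo_subset_Icc_self).stronglyMeasurableAtFilter isOpen_Ioo u hu)
      (hr.continuousAt (Icc_mem_nhds hu.1 hu.2))
  exact (hV.mul hI.exp).congr_deriv (by ring)

theorem continuousOn_mul_exp_integral (hab : a ≤ b) (hV : ContinuousOn V (Icc a b))
    (hr : ContinuousOn r (Icc a b)) :
    ContinuousOn (fun s => V s * Real.exp (∫ x in a..s, r x)) (Icc a b) := by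
  have hI := intervalIntegral.continuousOn_primitive_interval (μ := volume) (f := r) (a := a)
    (b := b)
  rw [uIcc_of_le hab] at hI
  exact hV.mul (Real.continuous_exp.comp_continuousOn (hI hr.integrableOn_Icc))

theorem le_mul_exp_neg_integral_of_hasDerivAt (hab : a ≤ b) (hV : ContinuousOn V (Icc a b))
    (hr : ContinuousOn r (Icc a b)) (hV' : ∀ u ∈ Ioo a b, HasDerivAt V (V' u) u)
    (hle : ∀ u ∈ Ioo a b, V' u ≤ -(r u * V u)) :
    V b ≤ V a * Real.exp (-∫ x in a..b, r x) := by
  have hanti : AntitoneOn (fun s => V s * Real.exp (∫ x in a..s, r x)) (Icc a b) := by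
    refine antitoneOn_of_deriv_nonpos (convex_Icc a b) (continuousOn_mul_exp_integral hab hV hr)
      ?_ fun u hu => ?_ <;> rw [interior_Icc] at *
    · exact fun u hu =>
        (hasDerivAt_mul_exp_integral hr hu (hV' u hu)).differentiableAt.differentiableWithinAt
    · rw [(hasDerivAt_mul_exp_integral hr hu (hV' u hu)).deriv]
      exact mul_nonpos_of_nonpos_of_nonneg (by linarith [hle u hu]) (Real.exp_pos _).le
  have := hanti (left_mem_Icc.2 hab) (right_mem_Icc.2 hab) hab
  simp only [intervalIntegral.integral_same, Real.exp_zero, mul_one] at this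
  rwa [Real.exp_neg, ← div_eq_mul_inv, le_div_iff₀ (Real.exp_pos _)]

theorem mul_exp_neg_integral_le_of_hasDerivAt (hab : a ≤ b) (hV : ContinuousOn V (Icc a b))
    (hr : ContinuousOn r (Icc a b)) (hV' : ∀ u ∈ Ioo a b, HasDerivAt V (V' u) u)
    (hle : ∀ u ∈ Ioo a b, -(r u * V u) ≤ V' u) :
    V a * Real.exp (-∫ x in a..b, r x) ≤ V b := by
  have hmono : MonotoneOn (fun s => V s * Real.exp (∫ x in a..s, r x)) (Icc a b) := by
    refine monotoneOn_of_deriv_nonneg (convex_Icc a b) (continuousOn_mul_exp_integral hab hV hr)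
      ?_ fun u hu => ?_ <;> rw [interior_Icc] at *
    · exact fun u hu =>
        (hasDerivAt_mul_exp_integral hr hu (hV' u hu)).differentiableAt.differentiableWithinAt
    · rw [(hasDerivAt_mul_exp_integral hr hu (hV' u hu)).deriv]
      exact mul_nonneg (by linarith [hle u hu]) (Real.exp_pos _).le
  have := hmono (left_mem_Icc.2 hab) (right_mem_Icc.2 hab) hab
  simp only [intervalIntegral.integral_same, Real.exp_zero, mul_one] at this
  rwa [Real.exp_neg, ← div_eq_mul_inv, div_le_iff₀ (Real.exp_pos _)]

end Comparison

theorem hasDerivAt_integral_Ioi {E : Type*} [NormedAddCommGroup E] [NormedSpace ℝ E]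
    [CompleteSpace E] {f : ℝ → E} {a b : ℝ} (hf : IntegrableOn f (Ioi a)) (hab : a < b)
    (hfb : ContinuousAt f b) : HasDerivAt (fun u => ∫ x in Ioi u, f x) (-f b) b := by
  have hI := intervalIntegral.integral_hasDerivAt_right
    ((intervalIntegrable_iff_integrableOn_Ioc_of_le hab.le).2 (hf.mono_set Ioc_subset_Ioi_self))
    ⟨Ioi a, Ioi_mem_nhds hab, hf.aestronglyMeasurable⟩ hfb
  refine (hI.const_sub (∫ x in Ioi a, f x)).congr_of_eventuallyEq ?_
  filter_upwards [Ioi_mem_nhds hab] with u hu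
  rw [← intervalIntegral.integral_Ioi_sub_Ioi hf (le_of_lt hu), sub_sub_cancel]

theorem sqrt_mul_exp_neg (c z : ℝ) :
    √(c * Real.exp (-z)) = √c * Real.exp (-(1 / 2) * z) := by
  rw [Real.sqrt_mul' _ (Real.exp_pos _).le, ← Real.exp_half]
  ring_nf

namespace IsTransitionMatrix

variable {n : ℕ} {t₀ γ lam : ℝ} {A : ℝ → Matrix (Fin n) (Fin n) ℝ}
  {Φ : ℝ → ℝ → Matrix (Fin n) (Fin n) ℝ}

theorem integrableOn_transpose_mul_self (hΦ : IsTransitionMatrix t₀ A Φ)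
    (hS : IsUniformlyExpStable t₀ γ lam Φ) {τ : ℝ} (hτ : τ ∈ Ici t₀) :
    IntegrableOn (fun s => (Φ s τ)ᵀ * Φ s τ) (Ioi τ) :=
  integrableOn_transpose_mul_self_of_norm_le_exp hS.rate_pos
    ((hΦ.continuousOn_fst hτ).mono fun _ hs => Ici_subset_Ici.2 hτ (Ioi_subset_Ici_self hs))
    fun s hs => hS.norm_le τ hτ s (Ioi_subset_Ici_self hs)

theorem posDef_Hmat (hΦ : IsTransitionMatrix t₀ A Φ) (hS : IsUniformlyExpStable t₀ γ lam Φ)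
    {τ : ℝ} (hτ : τ ∈ Ici t₀) : (Hmat Φ τ).PosDef :=
  posDef_integral_Ioi_transpose_mul_self (hΦ.integrableOn_transpose_mul_self hS hτ)
    ((hΦ.continuousOn_fst hτ τ hτ).mono (Ici_subset_Ici.2 hτ)) (hΦ.apply_self τ hτ)

variable {x : ℝ → Fin n → ℝ}

theorem dotProduct_Hmat_mulVec (hΦ : IsTransitionMatrix t₀ A Φ)
    (hS : IsUniformlyExpStable t₀ γ lam Φ)
    (hx : ∀ t ∈ Ici t₀, HasDerivWithinAt x (A t *ᵥ x t) (Ici t₀) t)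
    {τ : ℝ} (hτ : τ ∈ Ici t₀) :
    x τ ⬝ᵥ (Hmat Φ τ *ᵥ x τ) = ∫ s in Ioi τ, x s ⬝ᵥ x s := by
  rw [Hmat, dotProduct_integral_transpose_mul_self_mulVec
    (hΦ.integrableOn_transpose_mul_self hS hτ)]
  refine setIntegral_congr_fun measurableSet_Ioi fun s hs => ?_
  rw [← hΦ.eq_mulVec hx (Ici_subset_Ici.2 hτ (Ioi_subset_Ici_self hs)) hτ]

theorem wNorm_Hmat_eq_sqrt (hΦ : IsTransitionMatrix t₀ A Φ)
    (hS : IsUniformlyExpStable t₀ γ lam Φ)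
    (hx : ∀ t ∈ Ici t₀, HasDerivWithinAt x (A t *ᵥ x t) (Ici t₀) t)
    {τ : ℝ} (hτ : τ ∈ Ici t₀) :
    wNorm (Hmat Φ τ) (x τ) = √(∫ s in Ioi τ, x s ⬝ᵥ x s) := by
  rw [wNorm, hΦ.dotProduct_Hmat_mulVec hS hx hτ]

theorem lambdaMin_Hmat_mul_le (hΦ : IsTransitionMatrix t₀ A Φ)
    (hS : IsUniformlyExpStable t₀ γ lam Φ)
    (hx : ∀ t ∈ Ici t₀, HasDerivWithinAt x (A t *ᵥ x t) (Ici t₀) t)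
    {τ : ℝ} (hτ : τ ∈ Ici t₀) :
    lambdaMin (Hmat Φ τ) * (x τ ⬝ᵥ x τ) ≤ ∫ s in Ioi τ, x s ⬝ᵥ x s :=
  hΦ.dotProduct_Hmat_mulVec hS hx hτ ▸
    lambdaMin_mul_le_dotProduct_mulVec (hΦ.posDef_Hmat hS hτ).isHermitian (x τ)

theorem le_lambdaMax_Hmat_mul (hΦ : IsTransitionMatrix t₀ A Φ)
    (hS : IsUniformlyExpStable t₀ γ lam Φ)
    (hx : ∀ t ∈ Ici t₀, HasDerivWithinAt x (A t *ᵥ x t) (Ici t₀) t)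
    {τ : ℝ} (hτ : τ ∈ Ici t₀) :
    ∫ s in Ioi τ, x s ⬝ᵥ x s ≤ lambdaMax (Hmat Φ τ) * (x τ ⬝ᵥ x τ) :=
  hΦ.dotProduct_Hmat_mulVec hS hx hτ ▸
    dotProduct_mulVec_le_lambdaMax (hΦ.posDef_Hmat hS hτ).isHermitian (x τ)

theorem integrableOn_dotProduct_self (hΦ : IsTransitionMatrix t₀ A Φ)
    (hS : IsUniformlyExpStable t₀ γ lam Φ)
    (hx : ∀ t ∈ Ici t₀, HasDerivWithinAt x (A t *ᵥ x t) (Ici t₀) t) :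
    IntegrableOn (fun s => x s ⬝ᵥ x s) (Ioi t₀) := by
  refine IntegrableOn.congr_fun (integrable_dotProduct_mulVec_mulVec
    (hΦ.integrableOn_transpose_mul_self hS self_mem_Ici) (x t₀)) (fun s hs => ?_)
    measurableSet_Ioi
  rw [← hΦ.eq_mulVec hx (Ioi_subset_Ici_self hs) self_mem_Ici]

theorem hasDerivAt_integral_Ioi_dotProduct_self (hΦ : IsTransitionMatrix t₀ A Φ)
    (hS : IsUniformlyExpStable t₀ γ lam Φ)
    (hx : ∀ t ∈ Ici t₀, HasDerivWithinAt x (A t *ᵥ x t) (Ici t₀) t)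
    {τ : ℝ} (hτ : t₀ < τ) :
    HasDerivAt (fun u => ∫ s in Ioi u, x s ⬝ᵥ x s) (-(x τ ⬝ᵥ x τ)) τ :=
  hasDerivAt_integral_Ioi (hΦ.integrableOn_dotProduct_self hS hx) hτ
    (((continuous_id.dotProduct continuous_id).comp_continuousOn
      fun s hs => (hx s hs).continuousWithinAt).continuousAt (Ici_mem_nhds hτ))

theorem Hmat_eq (hΦ : IsTransitionMatrix t₀ A Φ) (hS : IsUniformlyExpStable t₀ γ lam Φ)
    {τ : ℝ} (hτ : τ ∈ Ici t₀) :
    Hmat Φ τ = (Φ t₀ τ)ᵀ * (∫ s in Ioi τ, (Φ s t₀)ᵀ * Φ s t₀) * Φ t₀ τ := by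
  rw [← integral_transpose_mul_self_mul ((hΦ.integrableOn_transpose_mul_self hS
    self_mem_Ici).mono_set (Ioi_subset_Ioi hτ))]
  refine setIntegral_congr_fun measurableSet_Ioi fun s hs => ?_
  rw [hΦ.mul_eq (Ici_subset_Ici.2 hτ (Ioi_subset_Ici_self hs)) self_mem_Ici hτ]

theorem continuousOn_Hmat (hΦ : IsTransitionMatrix t₀ A Φ)
    (hS : IsUniformlyExpStable t₀ γ lam Φ) :
    ContinuousOn (Hmat Φ) (Ici t₀) := by
  have hP := hΦ.continuousOn_snd
  refine (((continuous_id.matrix_transpose.comp_continuousOn hP).mul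
    (hΦ.integrableOn_transpose_mul_self hS self_mem_Ici).continuousOn_Ici_primitive_Ioi).mul
    hP).congr fun τ hτ => hΦ.Hmat_eq hS hτ

theorem continuousOn_one_div_lambdaMin_Hmat [Nonempty (Fin n)]
    (hΦ : IsTransitionMatrix t₀ A Φ) (hS : IsUniformlyExpStable t₀ γ lam Φ) :
    ContinuousOn (fun τ => 1 / lambdaMin (Hmat Φ τ)) (Ici t₀) :=
  continuousOn_const.div (lipschitzOnWith_lambdaMin.continuousOn.comp (hΦ.continuousOn_Hmat hS)
    fun _ hτ => (hΦ.posDef_Hmat hS hτ).isHermitian)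
    fun _ hτ => (lambdaMin_pos (hΦ.posDef_Hmat hS hτ)).ne'

theorem continuousOn_one_div_lambdaMax_Hmat [Nonempty (Fin n)]
    (hΦ : IsTransitionMatrix t₀ A Φ) (hS : IsUniformlyExpStable t₀ γ lam Φ) :
    ContinuousOn (fun τ => 1 / lambdaMax (Hmat Φ τ)) (Ici t₀) :=
  continuousOn_const.div (lipschitzOnWith_lambdaMax.continuousOn.comp (hΦ.continuousOn_Hmat hS)
    fun _ hτ => (hΦ.posDef_Hmat hS hτ).isHermitian)
    fun _ hτ => (lambdaMax_pos (hΦ.posDef_Hmat hS hτ)).ne'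

end IsTransitionMatrix

theorem stmt10_general {n : ℕ} (t₀ : ℝ) (A : ℝ → Matrix (Fin n) (Fin n) ℝ)
    (hA : ContinuousOn A (Ici t₀))
    (Φ : ℝ → ℝ → Matrix (Fin n) (Fin n) ℝ)
    (hΦ_id : ∀ τ ∈ Ici t₀, Φ τ τ = 1)
    (hΦ_deriv : ∀ τ ∈ Ici t₀, ∀ t ∈ Ici t₀,
      HasDerivWithinAt (fun s => Φ s τ) (A t * Φ t τ) (Ici t₀) t)
    (γ lam : ℝ) (hlam : 0 < lam)
    (hUAS : ∀ τ ∈ Ici t₀, ∀ t ∈ Ici τ, ‖Φ t τ‖ ≤ γ * Real.exp (-lam * (t - τ)))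
    (x : ℝ → Fin n → ℝ)
    (hx : ∀ t ∈ Ici t₀, HasDerivWithinAt x (A t *ᵥ x t) (Ici t₀) t) :
    ∀ t ∈ Ici t₀,
      wNorm (Hmat Φ t₀) (x t₀) *
          Real.exp (-(1 / 2) * ∫ τ in t₀..t, 1 / lambdaMin (Hmat Φ τ))
        ≤ wNorm (Hmat Φ t) (x t) ∧
      wNorm (Hmat Φ t) (x t)
        ≤ wNorm (Hmat Φ t₀) (x t₀) *
            Real.exp (-(1 / 2) * ∫ τ in t₀..t, 1 / lambdaMax (Hmat Φ τ)) := by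
  intro t (ht : t₀ ≤ t)
  rcases isEmpty_or_nonempty (Fin n) with hn | hn
  · simp [wNorm, dotProduct]
  have hΦ : IsTransitionMatrix t₀ A Φ := ⟨hA, hΦ_id, hΦ_deriv⟩
  have hS : IsUniformlyExpStable t₀ γ lam Φ := ⟨hlam, hUAS⟩
  set V : ℝ → ℝ := fun u => ∫ s in Ioi u, x s ⬝ᵥ x s
  have hVc : ContinuousOn V (Icc t₀ t) :=
    (hΦ.integrableOn_dotProduct_self hS hx).continuousOn_Ici_primitive_Ioi.mono
      Icc_subset_Ici_self
  have hV' : ∀ u ∈ Ioo t₀ t, HasDerivAt V (-(x u ⬝ᵥ x u)) u := fun u hu =>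
    hΦ.hasDerivAt_integral_Ioi_dotProduct_self hS hx hu.1
  have hlo : ∀ u ∈ Ioo t₀ t, -(1 / lambdaMin (Hmat Φ u) * V u) ≤ -(x u ⬝ᵥ x u) := by
    intro u hu
    rw [neg_le_neg_iff, one_div_mul_eq_div,
      le_div_iff₀ (lambdaMin_pos (hΦ.posDef_Hmat hS hu.1.le)), mul_comm]
    exact hΦ.lambdaMin_Hmat_mul_le hS hx hu.1.le
  have hhi : ∀ u ∈ Ioo t₀ t, -(x u ⬝ᵥ x u) ≤ -(1 / lambdaMax (Hmat Φ u) * V u) := by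
    intro u hu
    rw [neg_le_neg_iff, one_div_mul_eq_div,
      div_le_iff₀ (lambdaMax_pos (hΦ.posDef_Hmat hS hu.1.le)), mul_comm]
    exact hΦ.le_lambdaMax_Hmat_mul hS hx hu.1.le
  rw [hΦ.wNorm_Hmat_eq_sqrt hS hx self_mem_Ici, hΦ.wNorm_Hmat_eq_sqrt hS hx ht,
    ← sqrt_mul_exp_neg, ← sqrt_mul_exp_neg]
  exact ⟨Real.sqrt_le_sqrt <| mul_exp_neg_integral_le_of_hasDerivAt ht hVc
      ((hΦ.continuousOn_one_div_lambdaMin_Hmat hS).mono Icc_subset_Ici_self) hV' hlo,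
    Real.sqrt_le_sqrt <| le_mul_exp_neg_integral_of_hasDerivAt ht hVc
      ((hΦ.continuousOn_one_div_lambdaMax_Hmat hS).mono Icc_subset_Ici_self) hV' hhi⟩

/-- for a uniformly asymptotically stable system and any solution `x`, for all
`t ≥ t₀`:
`‖x(t₀)‖_{H(t₀)} e^{−(1/2)∫_{t₀}^t dτ/λ_min[H(τ)]} ≤ ‖x(t)‖_{H(t)}
  ≤ ‖x(t₀)‖_{H(t₀)} e^{−(1/2)∫_{t₀}^t dτ/λ_max[H(τ)]}`. -/
theorem stmt10 {n : ℕ} (t₀ : ℝ) (A : ℝ → Matrix (Fin n) (Fin n) ℝ)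
    (hA : ContinuousOn A (Ici t₀))
    (Φ : ℝ → ℝ → Matrix (Fin n) (Fin n) ℝ)
    (hΦ_id : ∀ τ ∈ Ici t₀, Φ τ τ = 1)
    (hΦ_deriv : ∀ τ ∈ Ici t₀, ∀ t ∈ Ici t₀,
      HasDerivWithinAt (fun s => Φ s τ) (A t * Φ t τ) (Ici t₀) t)
    (γ lam : ℝ) (hγ : 0 < γ) (hlam : 0 < lam)
    (hUAS : ∀ τ ∈ Ici t₀, ∀ t ∈ Ici τ, ‖Φ t τ‖ ≤ γ * Real.exp (-lam * (t - τ)))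
    (x : ℝ → Fin n → ℝ)
    (hx : ∀ t ∈ Ici t₀, HasDerivWithinAt x (A t *ᵥ x t) (Ici t₀) t) :
    ∀ t ∈ Ici t₀,
      wNorm (Hmat Φ t₀) (x t₀) *
          Real.exp (-(1 / 2) * ∫ τ in t₀..t, 1 / lambdaMin (Hmat Φ τ))
        ≤ wNorm (Hmat Φ t) (x t) ∧
      wNorm (Hmat Φ t) (x t)
        ≤ wNorm (Hmat Φ t₀) (x t₀) *
            Real.exp (-(1 / 2) * ∫ τ in t₀..t, 1 / lambdaMax (Hmat Φ τ)) :=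
  stmt10_general t₀ A hA Φ hΦ_id hΦ_deriv γ lam hlam hUAS x hx
end

section
/- Let A be a constant real n×n matrix such that there exist constants γ, λ > 0 with ‖e^{At}‖_I ≤ γ·e^{−λt} for all t ≥ 0. Then the integral H = ∫_0^∞ e^{Aᵀτ}·e^{Aτ} dτ converges, H is symmetric and positive definite, and H satisfies the Lyapunov equation Aᵀ·H + H·A = −I. -/
/-! The integrand `f τ = e^{τAᵀ} e^{τA} = (e^{τA})ᵀ e^{τA}` has operator norm `‖e^{τA}‖²`, hence
is bounded by `γ² e^{-2λτ}`: it is integrable on `(0, ∞)` and tends to `0`. Each `f τ` is positive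
definite because `e^{τA}` is invertible, and positive definiteness passes to the integral. Finally
`f' = Aᵀ f + f A` with `f 0 = 1`, so integrating over `(0, ∞)` gives `Aᵀ H + H A = 0 - 1`. -/

open scoped Matrix
open scoped Matrix.Norms.L2Operator
open Set MeasureTheory Filter Topology NormedSpace

section Decay

variable {E : Type*} [NormedAddCommGroup E] {f : ℝ → E} {a b C : ℝ}

theorem integrableOn_Ioi_of_norm_le_mul_exp
    (hf : AEStronglyMeasurable f (volume.restrict (Ioi a))) (hb : 0 < b)
    (hbound : ∀ t, a ≤ t → ‖f t‖ ≤ C * Real.exp (-b * t)) : IntegrableOn f (Ioi a) := by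
  refine Integrable.mono' ((exp_neg_integrableOn_Ioi a hb).const_mul C) hf ?_
  filter_upwards [ae_restrict_mem measurableSet_Ioi] with t ht
  exact hbound t (le_of_lt ht)

theorem tendsto_zero_of_norm_le_mul_exp (hb : 0 < b)
    (hbound : ∀ t, a ≤ t → ‖f t‖ ≤ C * Real.exp (-b * t)) : Tendsto f atTop (𝓝 0) := by
  have hexp : Tendsto (fun t => C * Real.exp (-b * t)) atTop (𝓝 0) := by
    simpa using (Real.tendsto_exp_atBot.comp
      (tendsto_id.const_mul_atTop_of_neg (neg_neg_of_pos hb))).const_mul C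
  exact squeeze_zero_norm' (eventually_ge_atTop a |>.mono hbound) hexp

end Decay

theorem hasDerivAt_exp_smul_mul_exp_smul {𝔸 : Type*} [NormedRing 𝔸] [NormedAlgebra ℝ 𝔸]
    [CompleteSpace 𝔸] (B C : 𝔸) (t : ℝ) :
    HasDerivAt (fun u : ℝ => exp (u • B) * exp (u • C))
      (B * (exp (t • B) * exp (t • C)) + exp (t • B) * exp (t • C) * C) t :=
  ((hasDerivAt_exp_smul_const' B t).mul (hasDerivAt_exp_smul_const C t)).congr_deriv
    (by simp only [mul_assoc])

theorem mul_setIntegral_Ioi_add_setIntegral_Ioi_mul {𝔸 : Type*} [NormedRing 𝔸]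
    [NormedAlgebra ℝ 𝔸] [CompleteSpace 𝔸] {f : ℝ → 𝔸} {a : ℝ} {P Q : 𝔸}
    (hderiv : ∀ t ∈ Ici a, HasDerivAt f (P * f t + f t * Q) t) (hf : IntegrableOn f (Ioi a))
    (hlim : Tendsto f atTop (𝓝 0)) :
    P * (∫ t in Ioi a, f t) + (∫ t in Ioi a, f t) * Q = -f a := by
  rw [← integral_const_mul_of_integrable hf, ← integral_mul_const_of_integrable hf,
    ← integral_add (hf.const_mul P) (hf.mul_const Q),
    integral_Ioi_of_hasDerivAt_of_tendsto' hderiv ((hf.const_mul P).add (hf.mul_const Q)) hlim,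
    zero_sub]

theorem setIntegral_Ioi_pos {g : ℝ → ℝ} {a : ℝ} (hg : IntegrableOn g (Ioi a))
    (hpos : ∀ t ∈ Ioi a, 0 < g t) : 0 < ∫ t in Ioi a, g t := by
  rw [setIntegral_pos_iff_support_of_nonneg_ae _ hg,
    inter_eq_right.mpr fun t ht => Function.mem_support.mpr (hpos t ht).ne', Real.volume_Ioi]
  · exact WithTop.top_pos
  · filter_upwards [ae_restrict_mem measurableSet_Ioi] with t ht using (hpos t ht).le

namespace Matrix

section Integral

variable {m n : Type*} [Fintype m] [Fintype n] [DecidableEq n]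
  {X : Type*} [MeasurableSpace X] {μ : Measure X}

theorem transpose_integral [DecidableEq m] (f : X → Matrix m n ℝ) :
    (∫ x, f x ∂μ)ᵀ = ∫ x, (f x)ᵀ ∂μ :=
  ((transposeLinearEquiv m n ℝ ℝ).toContinuousLinearEquiv.integral_comp_comm f).symm

noncomputable def dotProductMulVecCLM (x : m → ℝ) (y : n → ℝ) : Matrix m n ℝ →L[ℝ] ℝ :=
  LinearMap.toContinuousLinearMap
    { toFun := fun M => x ⬝ᵥ (M *ᵥ y)
      map_add' := fun M N => by simp [add_mulVec, dotProduct_add]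
      map_smul' := fun c M => by simp [smul_mulVec, dotProduct_smul] }

theorem integrable_dotProduct_mulVec {f : X → Matrix m n ℝ} (hf : Integrable f μ)
    (x : m → ℝ) (y : n → ℝ) : Integrable (fun a => x ⬝ᵥ (f a *ᵥ y)) μ :=
  (dotProductMulVecCLM x y).integrable_comp hf

theorem dotProduct_integral_mulVec {f : X → Matrix m n ℝ} (hf : Integrable f μ)
    (x : m → ℝ) (y : n → ℝ) : x ⬝ᵥ ((∫ a, f a ∂μ) *ᵥ y) = ∫ a, x ⬝ᵥ (f a *ᵥ y) ∂μ :=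
  ((dotProductMulVecCLM x y).integral_comp_comm hf).symm

end Integral

variable {m : Type*} [Fintype m] [DecidableEq m]

theorem exp_smul_transpose (t : ℝ) (A : Matrix m m ℝ) : exp (t • Aᵀ) = (exp (t • A))ᵀ := by
  rw [← transpose_smul, exp_transpose]

theorem posDef_exp_smul_transpose_mul_exp_smul (t : ℝ) (A : Matrix m m ℝ) :
    (exp (t • Aᵀ) * exp (t • A)).PosDef := by
  rw [exp_smul_transpose, ← conjTranspose_eq_transpose_of_trivial]
  exact .conjTranspose_mul_self _ (mulVec_injective_iff_isUnit.mpr (isUnit_exp _))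

theorem l2_opNorm_exp_smul_transpose_mul_exp_smul (t : ℝ) (A : Matrix m m ℝ) :
    ‖exp (t • Aᵀ) * exp (t • A)‖ = ‖exp (t • A)‖ ^ 2 := by
  rw [exp_smul_transpose, ← conjTranspose_eq_transpose_of_trivial,
    l2_opNorm_conjTranspose_mul_self, sq]

theorem PosDef.setIntegral_Ioi {f : ℝ → Matrix m m ℝ} {a : ℝ} (hf : IntegrableOn f (Ioi a))
    (hpos : ∀ t ∈ Ioi a, (f t).PosDef) : (∫ t in Ioi a, f t).PosDef := by
  refine .of_dotProduct_mulVec_pos ?_ fun x hx => ?_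
  · rw [IsHermitian, conjTranspose_eq_transpose_of_trivial, transpose_integral]
    refine setIntegral_congr_fun measurableSet_Ioi fun t ht => ?_
    simpa [IsHermitian] using (hpos t ht).isHermitian.eq
  · rw [star_trivial, dotProduct_integral_mulVec hf]
    refine setIntegral_Ioi_pos (integrable_dotProduct_mulVec hf x x) fun t ht => ?_
    simpa using (hpos t ht).dotProduct_mulVec_pos hx

end Matrix

theorem stmt14_general {n : ℕ} (A : Matrix (Fin n) (Fin n) ℝ)
    (γ lam : ℝ) (hlam : 0 < lam)
    (hUAS : ∀ t : ℝ, 0 ≤ t →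
      ‖NormedSpace.exp (t • A)‖ ≤ γ * Real.exp (-lam * t)) :
    IntegrableOn
        (fun τ : ℝ => NormedSpace.exp (τ • Aᵀ) * NormedSpace.exp (τ • A)) (Ioi 0) ∧
    (∫ τ in Ioi (0 : ℝ), NormedSpace.exp (τ • Aᵀ) * NormedSpace.exp (τ • A))ᵀ
        = ∫ τ in Ioi (0 : ℝ), NormedSpace.exp (τ • Aᵀ) * NormedSpace.exp (τ • A) ∧
    (∀ x : Fin n → ℝ, x ≠ 0 →
      0 < x ⬝ᵥ ((∫ τ in Ioi (0 : ℝ),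
        NormedSpace.exp (τ • Aᵀ) * NormedSpace.exp (τ • A)) *ᵥ x)) ∧
    Aᵀ * (∫ τ in Ioi (0 : ℝ), NormedSpace.exp (τ • Aᵀ) * NormedSpace.exp (τ • A)) +
        (∫ τ in Ioi (0 : ℝ), NormedSpace.exp (τ • Aᵀ) * NormedSpace.exp (τ • A)) * A
      = -1 := by
  set f := fun τ : ℝ => exp (τ • Aᵀ) * exp (τ • A)
  have hderiv (t : ℝ) : HasDerivAt f (Aᵀ * f t + f t * A) t :=
    hasDerivAt_exp_smul_mul_exp_smul Aᵀ A t
  have hbound (t : ℝ) (ht : 0 ≤ t) : ‖f t‖ ≤ γ ^ 2 * Real.exp (-(2 * lam) * t) :=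
    calc ‖f t‖ = ‖exp (t • A)‖ ^ 2 := Matrix.l2_opNorm_exp_smul_transpose_mul_exp_smul t A
      _ ≤ (γ * Real.exp (-lam * t)) ^ 2 := pow_le_pow_left₀ (norm_nonneg _) (hUAS t ht) 2
      _ = γ ^ 2 * Real.exp (-(2 * lam) * t) := by rw [mul_pow, ← Real.exp_nat_mul]; ring_nf
  have hcont : Continuous f := continuous_iff_continuousAt.2 fun t => (hderiv t).continuousAt
  have hint : IntegrableOn f (Ioi 0) :=
    integrableOn_Ioi_of_norm_le_mul_exp hcont.aestronglyMeasurable (by positivity) hbound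
  have hH : (∫ t in Ioi 0, f t).PosDef :=
    .setIntegral_Ioi hint fun t _ => Matrix.posDef_exp_smul_transpose_mul_exp_smul t A
  refine ⟨hint, ?_, fun x hx => ?_, ?_⟩
  · simpa using hH.isHermitian.eq
  · simpa using hH.dotProduct_mulVec_pos hx
  · rw [mul_setIntegral_Ioi_add_setIntegral_Ioi_mul (fun t _ => hderiv t) hint
      (tendsto_zero_of_norm_le_mul_exp (by positivity) hbound)]
    simp [f]

/-- if `A` is a constant real `n×n` matrix with `‖e^{At}‖ ≤ γ e^{−λt}` for all
`t ≥ 0` (with `γ, λ > 0`), then `H = ∫_0^∞ e^{Aᵀτ} e^{Aτ} dτ` converges, is symmetric and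
positive definite, and satisfies the Lyapunov equation `AᵀH + HA = −I`. -/
theorem stmt14 {n : ℕ} (A : Matrix (Fin n) (Fin n) ℝ)
    (γ lam : ℝ) (hγ : 0 < γ) (hlam : 0 < lam)
    (hUAS : ∀ t : ℝ, 0 ≤ t →
      ‖NormedSpace.exp (t • A)‖ ≤ γ * Real.exp (-lam * t)) :
    IntegrableOn
        (fun τ : ℝ => NormedSpace.exp (τ • Aᵀ) * NormedSpace.exp (τ • A)) (Ioi 0) ∧
    (∫ τ in Ioi (0 : ℝ), NormedSpace.exp (τ • Aᵀ) * NormedSpace.exp (τ • A))ᵀ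
        = ∫ τ in Ioi (0 : ℝ), NormedSpace.exp (τ • Aᵀ) * NormedSpace.exp (τ • A) ∧
    (∀ x : Fin n → ℝ, x ≠ 0 →
      0 < x ⬝ᵥ ((∫ τ in Ioi (0 : ℝ),
        NormedSpace.exp (τ • Aᵀ) * NormedSpace.exp (τ • A)) *ᵥ x)) ∧
    Aᵀ * (∫ τ in Ioi (0 : ℝ), NormedSpace.exp (τ • Aᵀ) * NormedSpace.exp (τ • A)) +
        (∫ τ in Ioi (0 : ℝ), NormedSpace.exp (τ • Aᵀ) * NormedSpace.exp (τ • A)) * A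
      = -1 :=
  stmt14_general A γ lam hlam hUAS
end
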